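/- Assume μ ≥ α(1) and μ > r, and let w = w_{b*} be the solution of r w = (μ - α((1-x)^+))w' + (σ²/2)w'' on [0,b*] with w(0)=0, w'(b*)=1, w''(b*)=0 and b* > 1. Then w is concave on [0, b*]. -/

import Mathlib

/-!
At a critical point of `w` the equation reads `(σ²/2) w'' = r w`, so `w''` has the sign of `w`
there; a maximum principle then shows that `w ≥ 0` and that `w` is nondecreasing on `[0, b]`.
On `[1, b]` the equation has constant coefficients, so `w'` is a combination of `e^{px}` and
`e^{qx}` with `p > 0 > q`, and the terminal conditions `w'(b) = 1`, `w''(b) = 0` force `w'' ≤ 0`.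
On `[0, 1]`, differentiating the equation at an interior maximum of `w''` gives
`(r - α'(1 - x)) w' = (μ - α(1 - x)) w''`, whose left side is `≤ 0` because `α' ≥ r` and `w' ≥ 0`;
together with `w''(0) ≤ 0` and `w''(1) ≤ 0` this gives `w'' ≤ 0` on `[0, 1]`.
-/

open Set Topology Real

theorem IsLocalMin.deriv_deriv_nonneg {f : ℝ → ℝ} {x : ℝ} (h : IsLocalMin f x)
    (hc : ContinuousAt f x) : 0 ≤ deriv (deriv f) x := by
  by_contra! hneg
  have hconst : f =ᶠ[𝓝 x] fun _ => f x := by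
    filter_upwards [h, isLocalMax_of_deriv_deriv_neg hneg h.deriv_eq_zero hc] with y h₁ h₂
    exact le_antisymm h₂ h₁
  have := hconst.deriv.deriv_eq
  simp only [deriv_const'] at this
  linarith

theorem IsLocalMax.deriv_deriv_nonpos {f : ℝ → ℝ} {x : ℝ} (h : IsLocalMax f x)
    (hc : ContinuousAt f x) : deriv (deriv f) x ≤ 0 := by
  by_contra! hpos
  have hconst : f =ᶠ[𝓝 x] fun _ => f x := by
    filter_upwards [h, isLocalMin_of_deriv_deriv_pos hpos h.deriv_eq_zero hc] with y h₁ h₂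
    exact le_antisymm h₁ h₂
  have := hconst.deriv.deriv_eq
  simp only [deriv_const'] at this
  linarith

section MaximumPrinciple

variable {f : ℝ → ℝ} {a b k : ℝ}

theorem nonneg_on_Icc_of_deriv_deriv_eq_mul (hf : Continuous f) (hk : 0 < k)
    (hcrit : ∀ x ∈ Ioo a b, deriv f x = 0 → deriv (deriv f) x = k * f x)
    (ha : 0 ≤ f a) (hb : 0 ≤ f b) : ∀ x ∈ Icc a b, 0 ≤ f x := by
  intro x hx
  obtain ⟨m, hm, hmin⟩ := isCompact_Icc.exists_isMinOn ⟨x, hx⟩ hf.continuousOn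
  refine le_trans ?_ (hmin hx)
  by_contra! hneg
  have ham : a < m := hm.1.lt_of_ne (by rintro rfl; linarith)
  have hmb : m < b := hm.2.lt_of_ne (by rintro rfl; linarith)
  have hloc : IsLocalMin f m := hmin.isLocalMin (Icc_mem_nhds ham hmb)
  have := hloc.deriv_deriv_nonneg hf.continuousAt
  rw [hcrit m ⟨ham, hmb⟩ hloc.deriv_eq_zero] at this
  nlinarith

theorem monotoneOn_Icc_of_deriv_deriv_eq_mul (hf : Continuous f) (hk : 0 < k)
    (hcrit : ∀ x ∈ Ioo a b, deriv f x = 0 → deriv (deriv f) x = k * f x)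
    (ha : f a = 0) (hb : 0 ≤ f b) : MonotoneOn f (Icc a b) := by
  have hnonneg := nonneg_on_Icc_of_deriv_deriv_eq_mul hf hk hcrit ha.ge hb
  intro s hs t ht hst
  obtain ⟨m, hm, hmax⟩ :=
    isCompact_Icc.exists_isMaxOn (nonempty_Icc.2 (hs.1.trans hst)) hf.continuousOn
  have hsm : f s ≤ f m := hmax ⟨hs.1, hst⟩
  rcases hm.2.eq_or_lt with rfl | hmt
  · exact hsm
  suffices f m ≤ 0 by linarith [hnonneg t ht]
  rcases hm.1.eq_or_lt with rfl | ham
  · exact ha.le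
  have hloc : IsLocalMax f m := hmax.isLocalMax (Icc_mem_nhds ham hmt)
  have := hloc.deriv_deriv_nonpos hf.continuousAt
  rw [hcrit m ⟨ham, hmt.trans_le ht.2⟩ hloc.deriv_eq_zero] at this
  nlinarith

end MaximumPrinciple

section ConstantCoefficients

variable {f : ℝ → ℝ} {a b A B : ℝ}

theorem deriv_sub_mul_eq_mul_exp (hf : Differentiable ℝ f)
    (hf' : ∀ x ∈ Icc a b, HasDerivWithinAt (deriv f) (A * f x + B * deriv f x) (Icc a b) x)
    {p q : ℝ} (hsum : p + q = B) (hprod : p * q = -A) :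
    ∀ x ∈ Icc a b, deriv f x - q * f x = (deriv f b - q * f b) * exp (p * (x - b)) := by
  set φ : ℝ → ℝ := fun y => (deriv f y - q * f y) * exp (-p * y)
  have hφ : ∀ x ∈ Icc a b, φ x = φ a := by
    refine constant_of_has_deriv_right_zero ?_ fun x hx => ?_
    · have hf'c : ContinuousOn (deriv f) (Icc a b) := fun x hx => (hf' x hx).continuousWithinAt
      exact (hf'c.sub (continuous_const.mul hf.continuous).continuousOn).mul (by fun_prop)
    · have hexp : HasDerivAt (fun y => exp (-p * y)) (exp (-p * x) * -p) x := by
        simpa using ((hasDerivAt_id x).const_mul (-p)).exp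
      have := ((hf' x (Ico_subset_Icc_self hx)).sub
        ((hf x).hasDerivAt.hasDerivWithinAt.const_mul q)).mul hexp.hasDerivWithinAt
      refine (this.mono_of_mem_nhdsWithin (Icc_mem_nhdsGE_of_mem hx)).congr_deriv ?_
      simp only [Pi.sub_apply]
      linear_combination (exp (-p * x) * f x) * hprod - (exp (-p * x) * deriv f x) * hsum
  intro x hx
  have h := (hφ x hx).trans (hφ b ⟨hx.1.trans hx.2, le_rfl⟩).symm
  simp only [φ] at h
  rw [show p * (x - b) = -p * b + p * x by ring, exp_add, ← mul_assoc, ← h, mul_assoc,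
    ← exp_add]
  simp

theorem deriv_nonpos_of_deriv_deriv_eq (hA : 0 < A) (hf : Differentiable ℝ f)
    (hf' : ∀ x ∈ Icc a b, HasDerivWithinAt (deriv f) (A * f x + B * deriv f x) (Icc a b) x)
    (hb : 0 ≤ f b) (hb' : deriv f b = 0) : ∀ x ∈ Icc a b, deriv f x ≤ 0 := by
  -- `p > 0 > q` are the roots of `X ^ 2 - B * X - A`
  obtain ⟨d, hd, hdB⟩ : ∃ d, d ^ 2 = B ^ 2 + 4 * A ∧ |B| < d :=
    ⟨√(B ^ 2 + 4 * A), sq_sqrt (by positivity),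
      abs_lt_of_sq_lt_sq (by rw [sq_sqrt (by positivity)]; linarith [sq_abs B]) (sqrt_nonneg _)⟩
  set p := (B + d) / 2 with hpdef
  set q := (B - d) / 2 with hqdef
  have hp : 0 < p := by rw [hpdef]; linarith [neg_abs_le B]
  have hq : q < 0 := by rw [hqdef]; linarith [le_abs_self B]
  have hsum : p + q = B := by ring
  have hprod : p * q = -A := by linear_combination -hd / 4
  intro x hx
  have hEp := deriv_sub_mul_eq_mul_exp hf hf' hsum hprod x hx
  have hEq := deriv_sub_mul_eq_mul_exp hf hf' (by linarith : q + p = B)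
    (by linarith : q * p = -A) x hx
  rw [hb'] at hEp hEq
  have h₁ : exp (p * (x - b)) ≤ 1 := exp_le_one_iff.2 (by nlinarith [hx.2])
  have h₂ : 1 ≤ exp (q * (x - b)) := one_le_exp (by nlinarith [hx.2])
  have hX : deriv f x - q * f x ≤ -q * f b := by
    rw [hEp]; nlinarith [mul_nonneg (neg_nonneg.2 hq.le) hb]
  have hY : deriv f x - p * f x ≤ -p * f b := by
    rw [hEq]; nlinarith [mul_nonneg hp.le hb]
  have hcomb : (p - q) * deriv f x ≤ (p - q) * 0 := by
    nlinarith [mul_le_mul_of_nonneg_left hX hp.le,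
      mul_le_mul_of_nonneg_left hY (neg_nonneg.2 hq.le)]
  exact le_of_mul_le_mul_left hcomb (by linarith)

end ConstantCoefficients

section LinearODE

variable {w g : ℝ → ℝ} {a b r s : ℝ}

theorem monotoneOn_of_ode (hr : 0 < r) (hs : 0 < s) (hw : Continuous w)
    (hode : ∀ x ∈ Icc a b, r * w x = g x * deriv w x + s * deriv (deriv w) x)
    (ha : w a = 0) (hb : 0 ≤ w b) : MonotoneOn w (Icc a b) := by
  refine monotoneOn_Icc_of_deriv_deriv_eq_mul hw (div_pos hr hs) (fun x hx hx' => ?_) ha hb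
  have := hode x (Ioo_subset_Icc_self hx)
  rw [hx', mul_zero, zero_add] at this
  field_simp
  linarith

theorem deriv_deriv_nonpos_of_ode_const {m : ℝ} (hr : 0 < r) (hs : 0 < s)
    (hw1 : Differentiable ℝ w) (hw2 : Differentiable ℝ (deriv w))
    (hode : ∀ x ∈ Icc a b, r * w x = m * deriv w x + s * deriv (deriv w) x)
    (hb : 0 ≤ deriv w b) (hb' : deriv (deriv w) b = 0) :
    ∀ x ∈ Icc a b, deriv (deriv w) x ≤ 0 := by
  have hw'' : ∀ x ∈ Icc a b, deriv (deriv w) x = (r * w x - m * deriv w x) / s := by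
    intro x hx
    field_simp
    linarith [hode x hx]
  refine deriv_nonpos_of_deriv_deriv_eq (A := r / s) (B := -m / s) (div_pos hr hs) hw2
    (fun x hx => ?_) hb hb'
  have := (((hw1 x).hasDerivAt.const_mul r).sub ((hw2 x).hasDerivAt.const_mul m)).div_const s
  refine (this.hasDerivWithinAt.congr hw'' (hw'' x hx)).congr_deriv ?_
  field_simp
  ring

theorem deriv_deriv_nonpos_of_ode (hs : 0 < s) (hw : ContDiff ℝ 2 w)
    (hode : ∀ x ∈ Icc a b, r * w x = g x * deriv w x + s * deriv (deriv w) x)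
    (hg : ∀ x ∈ Ioo a b, ∃ d, HasDerivAt g d x ∧ r ≤ d) (hgpos : ∀ x ∈ Ioo a b, 0 < g x)
    (hw' : ∀ x ∈ Ioo a b, 0 ≤ deriv w x) (ha : deriv (deriv w) a ≤ 0)
    (hb : deriv (deriv w) b ≤ 0) : ∀ x ∈ Icc a b, deriv (deriv w) x ≤ 0 := by
  intro x hx
  obtain ⟨m, hm, hmax⟩ :=
    isCompact_Icc.exists_isMaxOn ⟨x, hx⟩ (hw.deriv' (n := 1)).continuous_deriv_one.continuousOn
  refine le_trans (hmax hx) ?_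
  rcases hm.1.eq_or_lt with rfl | ham
  · exact ha
  rcases hm.2.eq_or_lt with rfl | hmb
  · exact hb
  obtain ⟨d, hgd, hrd⟩ := hg m ⟨ham, hmb⟩
  have hev : deriv (deriv w) =ᶠ[𝓝 m] fun y => (r * w y - g y * deriv w y) / s := by
    filter_upwards [Icc_mem_nhds ham hmb] with y hy
    field_simp
    linarith [hode y hy]
  have hw3 := ((((hw.differentiable (by norm_num)) m).hasDerivAt.const_mul r).sub
    (hgd.mul (hw.differentiable_deriv_two m).hasDerivAt)).div_const s |>.congr_of_eventuallyEq hev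
  have hcrit := (hmax.isLocalMax (Icc_mem_nhds ham hmb)).hasDerivAt_eq_zero hw3
  rw [div_eq_zero_iff, or_iff_left hs.ne'] at hcrit
  nlinarith [hgpos m ⟨ham, hmb⟩, mul_nonneg (sub_nonneg.2 hrd) (hw' m ⟨ham, hmb⟩)]

end LinearODE

theorem hasDerivAt_sub_comp_max_one_sub {α : ℝ → ℝ} {x : ℝ} (μ : ℝ)
    (hα : DifferentiableAt ℝ α (1 - x)) (hx : x < 1) :
    HasDerivAt (fun y => μ - α (max (1 - y) 0)) (deriv α (1 - x)) x := by
  have h : HasDerivAt (fun y => μ - α (1 - y)) (deriv α (1 - x)) x := by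
    simpa using (hα.hasDerivAt.comp x ((hasDerivAt_id x).const_sub 1)).const_sub μ
  refine h.congr_of_eventuallyEq ?_
  filter_upwards [Iio_mem_nhds hx] with y hy
  rw [max_eq_left (by linarith [mem_Iio.1 hy])]

theorem stmt_10_general (μ σ r : ℝ) (hσ : 0 < σ) (hr : 0 < r)
    (α : ℝ → ℝ) (hα : ContDiff ℝ 1 α)
    (hαmono : StrictMonoOn α (Ici 0)) (hα0 : α 0 = 0)
    (hα' : ∀ x ≥ (0:ℝ), r ≤ deriv α x) (hμα : α 1 ≤ μ)
    (b : ℝ) (hb : 1 < b) (w : ℝ → ℝ) (hw : ContDiff ℝ 2 w)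
    (hode : ∀ x ∈ Icc (0:ℝ) b,
      r * w x = (μ - α (max (1 - x) 0)) * deriv w x + σ ^ 2 / 2 * deriv (deriv w) x)
    (hw0 : w 0 = 0) (hw'b : deriv w b = 1) (hw''b : deriv (deriv w) b = 0) :
    ConcaveOn ℝ (Icc 0 b) w := by
  have hs : 0 < σ ^ 2 / 2 := by positivity
  have hw1 : Differentiable ℝ w := hw.differentiable (by norm_num)
  have hw2 : Differentiable ℝ (deriv w) := hw.differentiable_deriv_two
  have h1 : (1 : ℝ) ∈ Ici 0 := mem_Ici.2 zero_le_one
  have hwb : 0 ≤ w b := by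
    have := hode b ⟨by linarith, le_rfl⟩
    rw [hw'b, hw''b, max_eq_right (by linarith), hα0] at this
    nlinarith [hα0 ▸ hαmono self_mem_Ici h1 one_pos]
  have hw' : ∀ x ∈ Icc 0 b, 0 ≤ deriv w x := fun x hx =>
    (hw1 x).derivWithin (uniqueDiffOn_Icc (by linarith) x hx) ▸
      (monotoneOn_of_ode hr hs hw.continuous hode hw0 hwb).derivWithin_nonneg
  have hright : ∀ x ∈ Icc 1 b, deriv (deriv w) x ≤ 0 := by
    refine deriv_deriv_nonpos_of_ode_const (m := μ) hr hs hw1 hw2 (fun x hx => ?_)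
      (hw'b ▸ zero_le_one) hw''b
    rw [hode x ⟨by linarith [hx.1], hx.2⟩, max_eq_right (by linarith [hx.1]), hα0, sub_zero]
  have hdrift : ∀ x ∈ Ioo (0 : ℝ) 1,
      ∃ d, HasDerivAt (fun y => μ - α (max (1 - y) 0)) d x ∧ r ≤ d := fun x hx =>
    ⟨_, hasDerivAt_sub_comp_max_one_sub μ (hα.differentiable one_ne_zero _) hx.2,
      hα' _ (by linarith [hx.2])⟩
  have hdrift_pos : ∀ x ∈ Ioo (0 : ℝ) 1, 0 < μ - α (max (1 - x) 0) := fun x hx => by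
    rw [max_eq_left (by linarith [hx.2])]
    linarith [hαmono (mem_Ici.2 (by linarith [hx.2])) h1 (by linarith [hx.1] : 1 - x < 1)]
  have hzero : deriv (deriv w) 0 ≤ 0 := by
    have := hode 0 ⟨le_rfl, by linarith⟩
    rw [hw0, sub_zero, max_eq_left zero_le_one] at this
    nlinarith [hw' 0 ⟨le_rfl, by linarith⟩]
  have hleft : ∀ x ∈ Icc 0 1, deriv (deriv w) x ≤ 0 :=
    deriv_deriv_nonpos_of_ode hs hw (fun x hx => hode x ⟨hx.1, hx.2.trans hb.le⟩) hdrift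
      hdrift_pos (fun x hx => hw' x ⟨hx.1.le, by linarith [hx.2]⟩) hzero (hright 1 ⟨le_rfl, hb.le⟩)
  refine concaveOn_of_deriv2_nonpos' (convex_Icc 0 b) hw1.differentiableOn hw2.differentiableOn
    fun x hx => ?_
  rw [Function.iterate_succ_apply, Function.iterate_one]
  rcases le_total x 1 with h | h
  · exact hleft x ⟨hx.1, h⟩
  · exact hright x ⟨h, hx.2⟩

theorem stmt_10 (μ σ r : ℝ) (hσ : 0 < σ) (hr : 0 < r) (hμr : r < μ)
    (α : ℝ → ℝ) (hα : ContDiff ℝ 1 α) (hαconv : ConvexOn ℝ (Ici 0) α)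
    (hαmono : StrictMonoOn α (Ici 0)) (hα0 : α 0 = 0)
    (hα' : ∀ x ≥ (0:ℝ), r ≤ deriv α x) (hμα : α 1 ≤ μ)
    (b : ℝ) (hb : 1 < b) (w : ℝ → ℝ) (hw : ContDiff ℝ 2 w)
    (hode : ∀ x ∈ Icc (0:ℝ) b,
      r * w x = (μ - α (max (1 - x) 0)) * deriv w x + σ ^ 2 / 2 * deriv (deriv w) x)
    (hw0 : w 0 = 0) (hw'b : deriv w b = 1) (hw''b : deriv (deriv w) b = 0) :
    ConcaveOn ℝ (Icc 0 b) w :=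
  stmt_10_general μ σ r hσ hr α hα hαmono hα0 hα' hμα b hb w hw hode hw0 hw'b hw''b
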